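/- For each fixed m ≥ 1, the sequence of Busemann increments B_n(0,m) := T(−n, 0) − T(−n, m) is nondecreasing in n, where −n denotes the site (−n,0), 0 = (0,0) and m = (m,0). -/

import Mathlib

/-- Nearest-neighbour adjacency on `ℤ × ℤ`. -/
def HAdj (p q : ℤ × ℤ) : Prop := (p.1 - q.1).natAbs + (p.2 - q.2).natAbs = 1

/-- A list of sites lies in the upper half-plane `ℤ × ℤ₊`. -/
def InHalf (Γ : List (ℤ × ℤ)) : Prop := ∀ p ∈ Γ, 0 ≤ p.2

/-- Cost of a path: sum of edge weights along consecutive pairs. -/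
def cost (τ : (ℤ × ℤ) → (ℤ × ℤ) → ℝ) : List (ℤ × ℤ) → ℝ
  | [] => 0
  | [_] => 0
  | a :: b :: rest => τ a b + cost τ (b :: rest)

/-- Half-plane first-passage time between `x` and `y`: infimum of costs of
nearest-neighbour paths from `x` to `y` staying in the upper half-plane. -/
noncomputable def T (τ : (ℤ × ℤ) → (ℤ × ℤ) → ℝ) (x y : ℤ × ℤ) : ℝ :=
  sInf {c | ∃ Γ : List (ℤ × ℤ), Γ.head? = some x ∧ Γ.getLast? = some y ∧
    Γ.Chain' HAdj ∧ InHalf Γ ∧ cost τ Γ = c}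

/-!
Cutting a path from `(-n-1,0)` to `(0,0)` and a path from `(-n,0)` to `(m,0)` at a common
vertex and exchanging their tails gives paths from `(-n,0)` to `(0,0)` and from `(-n-1,0)` to
`(m,0)`, so `T(-n,0) + T(-n-1,m) ≤ T(-n-1,0) + T(-n,m)`, which is the claim; it remains to see that
two such half-plane paths always meet.

This is a discrete Jordan-curve argument. Let `S(v)` be the signed number of crossings of the first
path `P` with the vertical ray of the dual lattice going up from the face just left-below `v`.
Moving `v` between neighbouring sites off `P` changes `S(v)` by a term that depends only on the
endpoints of `P` and vanishes because they lie on the boundary, so `S` is constant along a second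
path avoiding `P`. But on the boundary
`S(c,0) = [c ≤ 0] - [c ≤ -n-1]`, which is `1` at `c = -n` and `0` at `c = m`.
-/

def IsHalfPath (Γ : List (ℤ × ℤ)) (x y : ℤ × ℤ) : Prop :=
  Γ.head? = some x ∧ Γ.getLast? = some y ∧ Γ.IsChain HAdj ∧ InHalf Γ

lemma HAdj.cases {p q : ℤ × ℤ} (h : HAdj p q) :
    q = (p.1 + 1, p.2) ∨ p = (q.1 + 1, q.2) ∨ q = (p.1, p.2 + 1) ∨ p = (q.1, q.2 + 1) := by
  obtain ⟨p1, p2⟩ := p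
  obtain ⟨q1, q2⟩ := q
  simp only [HAdj, Prod.mk.injEq] at h ⊢
  omega

section Cost

variable (τ τ' : ℤ × ℤ → ℤ × ℤ → ℝ)

lemma cost_nonneg (hτ : ∀ p q, 0 ≤ τ p q) (Γ : List (ℤ × ℤ)) : 0 ≤ cost τ Γ := by
  induction Γ using cost.induct with
  | case3 a b rest ih => exact add_nonneg (hτ a b) ih
  | _ => simp [cost]

lemma cost_sub (Γ : List (ℤ × ℤ)) :
    cost τ Γ - cost τ' Γ = cost (fun p q => τ p q - τ' p q) Γ := by
  induction Γ using cost.induct with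
  | case3 a b rest ih => simp only [cost, ← ih]; ring
  | _ => simp [cost]

lemma cost_append_cons (s t : List (ℤ × ℤ)) (z : ℤ × ℤ) :
    cost τ (s ++ z :: t) = cost τ (s ++ [z]) + cost τ (z :: t) := by
  induction s using cost.induct with
  | case1 => simp [cost]
  | case2 a => simp [cost]
  | case3 a b rest ih =>
    simp only [List.cons_append] at ih ⊢
    rw [cost, cost, ih, add_assoc]

lemma cost_eq_sub_of_isChain {R : ℤ × ℤ → ℤ × ℤ → Prop} {ψ : ℤ × ℤ → ℝ}
    {Γ : List (ℤ × ℤ)} {x y : ℤ × ℤ} (hΓ : Γ.IsChain R)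
    (hτ : ∀ p ∈ Γ, ∀ q ∈ Γ, R p q → τ p q = ψ q - ψ p)
    (hx : Γ.head? = some x) (hy : Γ.getLast? = some y) : cost τ Γ = ψ y - ψ x := by
  induction Γ using cost.induct generalizing x with
  | case1 => simp at hx
  | case2 a =>
    simp only [List.head?_cons, List.getLast?_singleton, Option.some.injEq] at hx hy
    simp [cost, ← hx, hy]
  | case3 a b rest ih =>
    obtain ⟨hab, hrest⟩ := List.isChain_cons_cons.mp hΓ
    obtain rfl : a = x := by simpa using hx
    rw [List.getLast?_cons_cons] at hy
    rw [cost, ih hrest (fun p hp q hq => hτ p (.tail _ hp) q (.tail _ hq)) rfl hy,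
      hτ a (by simp) b (by simp) hab]
    ring

end Cost

lemma List.IsChain.apply_head_eq_apply_getLast {α β : Type*} {R : α → α → Prop} {f : α → β}
    {Γ : List α} {x y : α}
    (hΓ : Γ.IsChain R) (hf : ∀ p ∈ Γ, ∀ q ∈ Γ, R p q → f p = f q)
    (hx : Γ.head? = some x) (hy : Γ.getLast? = some y) : f x = f y := by
  induction hΓ generalizing x with
  | nil => simp at hx
  | singleton a => simp_all
  | cons_cons hab hrest ih =>
    obtain rfl := Option.some.inj hx.symm
    rw [List.getLast?_cons_cons] at hy
    rw [hf _ (by simp) _ (by simp) hab]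
    exact ih (fun p hp q hq => hf p (.tail _ hp) q (.tail _ hq)) rfl hy

lemma isHalfPath_append_cons_iff {s t : List (ℤ × ℤ)} {x y z : ℤ × ℤ} :
    IsHalfPath (s ++ z :: t) x y ↔ IsHalfPath (s ++ [z]) x z ∧ IsHalfPath (z :: t) z y := by
  have hhead : (s ++ z :: t).head? = (s ++ [z]).head? := by cases s <;> simp
  have hlast : (s ++ z :: t).getLast? = (z :: t).getLast? :=
    List.getLast?_append_of_ne_nil _ (List.cons_ne_nil _ _)
  rw [IsHalfPath, IsHalfPath, IsHalfPath, hhead, hlast, List.isChain_split]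
  simp only [InHalf, List.mem_append, List.mem_cons]
  grind

lemma IsHalfPath.exists_split (τ : ℤ × ℤ → ℤ × ℤ → ℝ) {Γ : List (ℤ × ℤ)} {x y z : ℤ × ℤ}
    (hΓ : IsHalfPath Γ x y) (hz : z ∈ Γ) :
    ∃ Γ₁ Γ₂, IsHalfPath Γ₁ x z ∧ IsHalfPath Γ₂ z y ∧ cost τ Γ = cost τ Γ₁ + cost τ Γ₂ := by
  obtain ⟨s, t, rfl⟩ := List.append_of_mem hz
  obtain ⟨h₁, h₂⟩ := isHalfPath_append_cons_iff.mp hΓ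
  exact ⟨_, _, h₁, h₂, cost_append_cons τ s t z⟩

lemma IsHalfPath.exists_append (τ : ℤ × ℤ → ℤ × ℤ → ℝ) {Γ₁ Γ₂ : List (ℤ × ℤ)} {x y z : ℤ × ℤ}
    (h₁ : IsHalfPath Γ₁ x z) (h₂ : IsHalfPath Γ₂ z y) :
    ∃ Γ, IsHalfPath Γ x y ∧ cost τ Γ = cost τ Γ₁ + cost τ Γ₂ := by
  obtain ⟨s, rfl⟩ := List.getLast?_eq_some_iff.mp h₁.2.1
  obtain ⟨t, rfl⟩ := List.head?_eq_some_iff.mp h₂.1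
  exact ⟨_, isHalfPath_append_cons_iff.mpr ⟨h₁, h₂⟩, cost_append_cons τ s t z⟩

lemma exists_isHalfPath_of_le {a b : ℤ} (hab : a ≤ b) : ∃ Γ, IsHalfPath Γ (a, 0) (b, 0) := by
  obtain ⟨k, rfl⟩ := Int.le.dest hab
  induction k generalizing a with
  | zero => exact ⟨[(a, 0)], by simp [IsHalfPath, InHalf]⟩
  | succ k ih =>
    obtain ⟨Γ, hΓ⟩ := ih (a := a + 1) (by omega)
    obtain ⟨t, rfl⟩ := List.head?_eq_some_iff.mp hΓ.1
    have hedge : IsHalfPath ([(a, 0)] ++ [(a + 1, 0)]) (a, 0) (a + 1, 0) := by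
      simp [IsHalfPath, InHalf, HAdj]
    rw [show a + ((k + 1 : ℕ) : ℤ) = a + 1 + k by push_cast; ring]
    exact ⟨_, isHalfPath_append_cons_iff.mpr ⟨hedge, hΓ⟩⟩

section Crossing

def rightOf (x : ℤ) (p : ℤ × ℤ) : ℝ := if x ≤ p.1 then 1 else 0

/-- For adjacent `p`, `q`: the signed number of crossings of the edge `p → q` with the vertical
ray `{v.1 - 1/2} × [v.2 - 1/2, ∞)` of the dual lattice. -/
def rayCrossing (v p q : ℤ × ℤ) : ℝ :=
  if p.2 = q.2 ∧ v.2 ≤ p.2 then rightOf v.1 q - rightOf v.1 p else 0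

def columnAbove (v p : ℤ × ℤ) : ℝ := if p.1 = v.1 ∧ v.2 ≤ p.2 then 1 else 0

variable {v p q : ℤ × ℤ}

lemma rayCrossing_eq_rayCrossing_above (h : HAdj p q) (hp : p ≠ v) (hq : q ≠ v) :
    rayCrossing v p q = rayCrossing (v.1, v.2 + 1) p q := by
  obtain ⟨p1, p2⟩ := p; obtain ⟨q1, q2⟩ := q; obtain ⟨v1, v2⟩ := v
  simp only [HAdj, ne_eq, Prod.mk.injEq] at h hp hq
  simp only [rayCrossing, rightOf]
  split_ifs <;> first | (exfalso; omega) | norm_num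

lemma rayCrossing_sub_rayCrossing_right (h : HAdj p q) (hp : p ≠ v) (hq : q ≠ v) :
    rayCrossing v p q - rayCrossing (v.1 + 1, v.2) p q = columnAbove v q - columnAbove v p := by
  obtain ⟨p1, p2⟩ := p; obtain ⟨q1, q2⟩ := q; obtain ⟨v1, v2⟩ := v
  simp only [HAdj, ne_eq, Prod.mk.injEq] at h hp hq
  simp only [rayCrossing, rightOf, columnAbove]
  split_ifs <;> first | (exfalso; omega) | norm_num

lemma rayCrossing_of_le (h : HAdj p q) (hp : v.2 ≤ p.2) (hq : v.2 ≤ q.2) :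
    rayCrossing v p q = rightOf v.1 q - rightOf v.1 p := by
  obtain ⟨p1, p2⟩ := p; obtain ⟨q1, q2⟩ := q
  simp only [HAdj] at h hp hq
  simp only [rayCrossing, rightOf]
  split_ifs <;> first | (exfalso; omega) | norm_num

variable {Γ : List (ℤ × ℤ)} {x y : ℤ × ℤ}

lemma cost_rayCrossing_eq_above (hΓ : Γ.IsChain HAdj) (hv : v ∉ Γ)
    (hx : Γ.head? = some x) (hy : Γ.getLast? = some y) :
    cost (rayCrossing v) Γ = cost (rayCrossing (v.1, v.2 + 1)) Γ := by
  rw [← sub_eq_zero, cost_sub, cost_eq_sub_of_isChain _ (ψ := fun _ => 0) hΓ _ hx hy, sub_self]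
  intro p hp q hq hpq
  rw [rayCrossing_eq_rayCrossing_above hpq (ne_of_mem_of_not_mem hp hv)
    (ne_of_mem_of_not_mem hq hv), sub_self, sub_self]

lemma cost_rayCrossing_sub_cost_rayCrossing_right (hΓ : Γ.IsChain HAdj) (hv : v ∉ Γ)
    (hx : Γ.head? = some x) (hy : Γ.getLast? = some y) :
    cost (rayCrossing v) Γ - cost (rayCrossing (v.1 + 1, v.2)) Γ =
      columnAbove v y - columnAbove v x := by
  rw [cost_sub]
  exact cost_eq_sub_of_isChain _ hΓ (fun p hp q hq hpq => rayCrossing_sub_rayCrossing_right hpq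
    (ne_of_mem_of_not_mem hp hv) (ne_of_mem_of_not_mem hq hv)) hx hy

lemma cost_rayCrossing_of_le (hΓ : Γ.IsChain HAdj) (hv : ∀ p ∈ Γ, v.2 ≤ p.2)
    (hx : Γ.head? = some x) (hy : Γ.getLast? = some y) :
    cost (rayCrossing v) Γ = rightOf v.1 y - rightOf v.1 x :=
  cost_eq_sub_of_isChain _ hΓ (fun p hp q hq hpq => rayCrossing_of_le hpq (hv p hp) (hv q hq)) hx hy

end Crossing

lemma cost_rayCrossing_eq_of_hAdj {P : List (ℤ × ℤ)} {a b : ℤ} (hP : IsHalfPath P (a, 0) (b, 0))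
    {u w : ℤ × ℤ} (huw : HAdj u w) (hu : u ∉ P) (hw : w ∉ P) (hu₀ : 0 ≤ u.2) (hw₀ : 0 ≤ w.2) :
    cost (rayCrossing u) P = cost (rayCrossing w) P := by
  obtain ⟨hx, hy, hchain, -⟩ := hP
  have hcol : ∀ v ∉ P, 0 ≤ v.2 → ∀ c : ℤ, (c, 0) ∈ P → columnAbove v (c, 0) = 0 := by
    rintro ⟨v₁, v₂⟩ hv hv₀ c hc
    rw [columnAbove, if_neg]
    rintro ⟨rfl, hle⟩
    obtain rfl : v₂ = 0 := le_antisymm hle hv₀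
    exact hv hc
  have ha : (a, 0) ∈ P := List.mem_of_mem_head? hx
  have hb : (b, 0) ∈ P := List.mem_of_getLast? hy
  rcases huw.cases with rfl | rfl | rfl | rfl
  · have := cost_rayCrossing_sub_cost_rayCrossing_right hchain hu hx hy
    rw [hcol u hu hu₀ b hb, hcol u hu hu₀ a ha] at this
    linarith
  · have := cost_rayCrossing_sub_cost_rayCrossing_right hchain hw hx hy
    rw [hcol w hw hw₀ b hb, hcol w hw hw₀ a ha] at this
    linarith
  · exact cost_rayCrossing_eq_above hchain hu hx hy
  · exact (cost_rayCrossing_eq_above hchain hw hx hy).symm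

theorem IsHalfPath.exists_mem_mem {P Q : List (ℤ × ℤ)} {a b c d : ℤ}
    (hP : IsHalfPath P (a, 0) (b, 0)) (hQ : IsHalfPath Q (c, 0) (d, 0))
    (hac : a < c) (hcb : c ≤ b) (hbd : b < d) : ∃ z ∈ P, z ∈ Q := by
  by_contra! hPQ
  have ⟨hPx, hPy, hPchain, hPhalf⟩ := hP
  obtain ⟨hQx, hQy, hQchain, hQhalf⟩ := hQ
  have hconst : cost (rayCrossing (c, 0)) P = cost (rayCrossing (d, 0)) P :=
    hQchain.apply_head_eq_apply_getLast (f := fun v => cost (rayCrossing v) P)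
      (fun u hu w hw huw => cost_rayCrossing_eq_of_hAdj hP huw
        (fun h => hPQ u h hu) (fun h => hPQ w h hw) (hQhalf u hu) (hQhalf w hw)) hQx hQy
  rw [cost_rayCrossing_of_le (v := (c, 0)) hPchain hPhalf hPx hPy,
    cost_rayCrossing_of_le (v := (d, 0)) hPchain hPhalf hPx hPy] at hconst
  simp only [rightOf, if_pos hcb, if_neg (not_le.mpr hac), if_neg (not_le.mpr hbd),
    if_neg (not_le.mpr (hac.trans_le (hcb.trans hbd.le)))] at hconst
  norm_num at hconst

section PassageTime

variable {τ : ℤ × ℤ → ℤ × ℤ → ℝ} {x y z : ℤ × ℤ}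

lemma T_le_cost (hτ : ∀ p q, 0 ≤ τ p q) {Γ : List (ℤ × ℤ)} (hΓ : IsHalfPath Γ x y) :
    T τ x y ≤ cost τ Γ :=
  csInf_le ⟨0, by rintro _ ⟨Γ', -, -, -, -, rfl⟩; exact cost_nonneg τ hτ Γ'⟩
    ⟨Γ, hΓ.1, hΓ.2.1, hΓ.2.2.1, hΓ.2.2.2, rfl⟩

lemma le_T {c : ℝ} (hne : ∃ Γ, IsHalfPath Γ x y) (h : ∀ Γ, IsHalfPath Γ x y → c ≤ cost τ Γ) :
    c ≤ T τ x y := by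
  obtain ⟨Γ, hΓ⟩ := hne
  refine le_csInf ⟨_, Γ, hΓ.1, hΓ.2.1, hΓ.2.2.1, hΓ.2.2.2, rfl⟩ ?_
  rintro _ ⟨Γ', h₁, h₂, h₃, h₄, rfl⟩
  exact h Γ' ⟨h₁, h₂, h₃, h₄⟩

lemma T_le_cost_add_cost (hτ : ∀ p q, 0 ≤ τ p q) {Γ₁ Γ₂ : List (ℤ × ℤ)}
    (h₁ : IsHalfPath Γ₁ x z) (h₂ : IsHalfPath Γ₂ z y) : T τ x y ≤ cost τ Γ₁ + cost τ Γ₂ := by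
  obtain ⟨Γ, hΓ, hcost⟩ := h₁.exists_append τ h₂
  exact hcost ▸ T_le_cost hτ hΓ

theorem T_add_T_le_of_crossing (hτ : ∀ p q, 0 ≤ τ p q) {x' y' : ℤ × ℤ}
    (hP : ∃ P, IsHalfPath P x y) (hQ : ∃ Q, IsHalfPath Q x' y')
    (hcross : ∀ P Q, IsHalfPath P x y → IsHalfPath Q x' y' → ∃ z ∈ P, z ∈ Q) :
    T τ x' y + T τ x y' ≤ T τ x y + T τ x' y' := by
  have key : ∀ P Q, IsHalfPath P x y → IsHalfPath Q x' y' →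
      T τ x' y + T τ x y' ≤ cost τ P + cost τ Q := by
    intro P Q hP hQ
    obtain ⟨z, hzP, hzQ⟩ := hcross P Q hP hQ
    obtain ⟨P₁, P₂, hP₁, hP₂, hPcost⟩ := hP.exists_split τ hzP
    obtain ⟨Q₁, Q₂, hQ₁, hQ₂, hQcost⟩ := hQ.exists_split τ hzQ
    linarith [T_le_cost_add_cost hτ hQ₁ hP₂, T_le_cost_add_cost hτ hP₁ hQ₂]
  have : T τ x' y + T τ x y' - T τ x' y' ≤ T τ x y := le_T hP fun P hP' => by
    have : T τ x' y + T τ x y' - cost τ P ≤ T τ x' y' :=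
      le_T hQ fun Q hQ' => by linarith [key P Q hP' hQ']
    linarith
  linarith

end PassageTime

/-- For fixed `m ≥ 1`, the Busemann increments
`B_n(0,m) = T(−n,0) − T(−n,m)` are nondecreasing in `n`. -/
theorem busemann_increments_mono (τ : (ℤ × ℤ) → (ℤ × ℤ) → ℝ)
    (hτ : ∀ p q, 0 ≤ τ p q) (m : ℤ) (hm : 1 ≤ m) :
    ∀ n : ℕ, 1 ≤ n →
      T τ (-(n : ℤ), 0) (0, 0) - T τ (-(n : ℤ), 0) (m, 0) ≤
        T τ (-((n : ℤ) + 1), 0) (0, 0) - T τ (-((n : ℤ) + 1), 0) (m, 0) := by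
  intro n _
  have hexchange := T_add_T_le_of_crossing (x := (-((n : ℤ) + 1), 0)) (y := (0, 0))
    (x' := (-(n : ℤ), 0)) (y' := (m, 0)) hτ
    (exists_isHalfPath_of_le (by omega)) (exists_isHalfPath_of_le (by omega))
    (fun P Q hP hQ => hP.exists_mem_mem hQ (by omega) (by omega) (by omega))
  linarith
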